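/- Let P ⊂ ℝ² be a finite set and let σ := |P|^{-1} · (counting measure on P) be the normalised counting measure on P. Let t, δ > 0, n ∈ ℕ, and C ≥ 1, and suppose that I_t^δ(σ^n) ≤ C. Then the number of 2n-tuples (p₁,…,p_n,q₁,…,q_n) ∈ P^{2n} with |(p₁ + ⋯ + p_n) − (q₁ + ⋯ + q_n)| ≤ δ is at most C' · C · δ^t |P|^{2n}, where C' > 0 is an absolute constant. -/

import Mathlib

open MeasureTheory Metric Set
open scoped ENNReal

noncomputable section

/-- The plane `ℝ²` with the Euclidean metric. -/
abbrev E2 : Type := EuclideanSpace ℝ (Fin 2)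

/-- The compact parabola `ℙ = {(x, x²) : x ∈ [-1,1]}`. -/
def parab : Set E2 := {p : E2 | p 0 ∈ Set.Icc (-1 : ℝ) 1 ∧ p 1 = (p 0) ^ 2}

/-- `ψ` is a standard approximate-identity profile on `ℝ²`: radially decreasing,
`∫ ψ = 1`, and `1_{B(1/2)} ≤ ψ ≤ 1_{B(1)}`. -/
def IsApproxId (ψ : E2 → ℝ) : Prop :=
  (∀ x y : E2, ‖x‖ ≤ ‖y‖ → ψ y ≤ ψ x) ∧
  (∫ x, ψ x = 1) ∧
  (∀ x : E2, ‖x‖ ≤ 1/2 → 1 ≤ ψ x) ∧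
  (∀ x : E2, ψ x ≤ 1) ∧
  (∀ x : E2, 0 ≤ ψ x) ∧
  (∀ x : E2, 1 < ‖x‖ → ψ x = 0)

/-- The mollified density `ν_δ(x) = (ν ∗ ψ_δ)(x)`, where `ψ_δ(x) = δ^{-2} ψ(x/δ)`. -/
def mollify (ψ : E2 → ℝ) (δ : ℝ) (ν : Measure E2) (x : E2) : ℝ :=
  ∫ y, (δ ^ 2)⁻¹ * ψ (δ⁻¹ • (x - y)) ∂ν

/-- The mollified Riesz energy `I_u^δ(ν) = ∬ |x−y|^{-u} ν_δ(x) ν_δ(y) dx dy`. -/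
def mollE (ψ : E2 → ℝ) (u δ : ℝ) (ν : Measure E2) : ℝ≥0∞ :=
  ∫⁻ x, ∫⁻ y, edist x y ^ (-u) * ENNReal.ofReal (mollify ψ δ ν x) *
    ENNReal.ofReal (mollify ψ δ ν y) ∂volume ∂volume

/-- Convolution of two measures on `ℝ²`: the push-forward of `μ × ν` under addition. -/
def mconv (μ ν : Measure E2) : Measure E2 :=
  Measure.map (fun p : E2 × E2 => p.1 + p.2) (μ.prod ν)

/-- The `k`-fold self-convolution `ν^k`; `ν^0 := δ₀`. -/
def convPow (ν : Measure E2) : ℕ → Measure E2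
  | 0 => Measure.dirac 0
  | k + 1 => mconv (convPow ν k) ν

/-- The normalised counting measure on the finite set `P`. -/
def countMeas (P : Finset E2) : Measure E2 :=
  (P.card : ℝ≥0∞)⁻¹ • ∑ p ∈ P, Measure.dirac p

/-!
Expanding `σ^n = |P|^{-n} ∑_{f ∈ P^n} δ_{f₁ + ⋯ + f_n}` and using `ψ ≥ 1` on `B(1/2)`, the
mollified density of `σ^n` is at least `|P|^{-n} δ^{-2}` times the number of sums `Σ f` within
`δ/2` of the point. If `|Σ f − Σ g| ≤ δ`, the balls `B(Σ f, δ/2)` and `B(Σ g, δ/2)` contain the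
balls of radius `δ/4` centred at the points `1/4` and `3/4` of the way from `Σ f` to `Σ g`, and any
two points of these smaller balls are at distance at most `δ`. So every such pair `(f, g)`
contributes at least `(π / (16 |P|^n))² δ^{-t}` to `I_t^δ(σ^n)`, whence the count is at most
`(256 / π²) C δ^t |P|^{2n}`.
-/

open Finset

namespace MeasureTheory.Measure

variable {M : Type*} [AddMonoid M] [MeasurableSpace M] [MeasurableAdd₂ M] {ι κ : Type*}

lemma conv_finsetSum (μ : Measure M) [SFinite μ] (s : Finset ι) (ν : ι → Measure M)
    [∀ i, IsFiniteMeasure (ν i)] : μ ∗ (∑ i ∈ s, ν i) = ∑ i ∈ s, μ ∗ ν i := by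
  classical
  induction s using Finset.induction with
  | empty => simp
  | insert i s hi ih => rw [sum_insert hi, sum_insert hi, conv_add, ih]

lemma finsetSum_conv (s : Finset ι) (μ : ι → Measure M) [∀ i, IsFiniteMeasure (μ i)]
    (ν : Measure M) [SFinite ν] : (∑ i ∈ s, μ i) ∗ ν = ∑ i ∈ s, μ i ∗ ν := by
  classical
  induction s using Finset.induction with
  | empty => simp
  | insert i s hi ih => rw [sum_insert hi, sum_insert hi, add_conv, ih]

lemma smul_sum_dirac_conv_smul_sum_dirac (a b : ℝ≥0∞) (s : Finset ι) (u : Finset κ)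
    (x : ι → M) (y : κ → M) :
    (a • ∑ i ∈ s, dirac (x i)) ∗ (b • ∑ j ∈ u, dirac (y j)) =
      (a * b) • ∑ i ∈ s, ∑ j ∈ u, dirac (x i + y j) := by
  rw [conv_smul_left, conv_smul_right, smul_smul, finsetSum_conv]
  simp only [conv_finsetSum, dirac_conv_dirac]

end MeasureTheory.Measure

lemma MeasureTheory.sum_lintegral_le_lintegral_sum {α ι : Type*} [MeasurableSpace α]
    (μ : Measure α) (s : Finset ι) (f : ι → α → ℝ≥0∞) :
    ∑ i ∈ s, ∫⁻ a, f i a ∂μ ≤ ∫⁻ a, ∑ i ∈ s, f i a ∂μ := by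
  classical
  induction s using Finset.induction with
  | empty => simp
  | insert i s hi ih =>
    simp only [Finset.sum_insert hi]
    exact (add_le_add le_rfl ih).trans (le_lintegral_add _ _)

lemma sum_piFinset_succ_eq_sum_sum_snoc {α β : Type*} [AddCommMonoid β] {k : ℕ} (s : Finset α)
    (g : (Fin (k + 1) → α) → β) :
    ∑ f ∈ Fintype.piFinset (fun _ => s), g f =
      ∑ f ∈ Fintype.piFinset (fun _ : Fin k => s), ∑ a ∈ s, g (Fin.snoc f a) := by
  rw [← sum_product']
  refine sum_nbij' (fun f => (Fin.init f, f (Fin.last k))) (fun p => Fin.snoc p.1 p.2)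
    ?_ ?_ ?_ ?_ ?_
  · intro f hf
    simp only [mem_product, Fintype.mem_piFinset] at hf ⊢
    exact ⟨fun i => hf _, hf _⟩
  · rintro ⟨f, a⟩ hfa
    simp only [mem_product, Fintype.mem_piFinset] at hfa ⊢
    exact Fin.lastCases (by simpa using hfa.2) (fun i => by simpa using hfa.1 i)
  all_goals simp

lemma convPow_countMeas (P : Finset E2) (n : ℕ) :
    convPow (countMeas P) n = ((#P : ℝ≥0∞) ^ n)⁻¹ •
      ∑ f ∈ Fintype.piFinset (fun _ : Fin n => P), Measure.dirac (∑ i, f i) := by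
  induction n with
  | zero => simp [convPow]
  | succ k ih =>
    rw [convPow, ih, countMeas, mconv, ← Measure.conv, Measure.smul_sum_dirac_conv_smul_sum_dirac,
      sum_piFinset_succ_eq_sum_sum_snoc, pow_succ, ENNReal.mul_inv (by simp) (by simp)]
    simp only [Fin.sum_univ_castSucc, Fin.snoc_castSucc, Fin.snoc_last]

section Energy

variable {E : Type*} [NormedAddCommGroup E] [NormedSpace ℝ E]

lemma exists_closedBall_quarter_subset_of_dist_le {u v : E} {δ : ℝ} (huv : dist u v ≤ δ) :
    ∃ c₁ c₂ : E, closedBall c₁ (δ / 4) ⊆ closedBall u (δ / 2) ∧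
      closedBall c₂ (δ / 4) ⊆ closedBall v (δ / 2) ∧
      ∀ x ∈ closedBall c₁ (δ / 4), ∀ y ∈ closedBall c₂ (δ / 4), dist x y ≤ δ := by
  refine ⟨AffineMap.lineMap u v (1 / 4 : ℝ), AffineMap.lineMap u v (3 / 4 : ℝ),
    closedBall_subset_closedBall' ?_, closedBall_subset_closedBall' ?_, fun x hx y hy => ?_⟩
  · rw [dist_lineMap_left]; norm_num; linarith
  · rw [dist_lineMap_right]; norm_num; linarith
  · have hc : dist (AffineMap.lineMap u v (1 / 4 : ℝ)) (AffineMap.lineMap u v (3 / 4 : ℝ)) ≤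
        δ / 2 := by
      rw [dist_lineMap_lineMap, Real.dist_eq]; norm_num; linarith
    linarith [dist_triangle4 x (AffineMap.lineMap u v (1 / 4 : ℝ))
      (AffineMap.lineMap u v (3 / 4 : ℝ)) y, mem_closedBall.1 hx, mem_closedBall'.1 hy]

variable [MeasurableSpace E] [BorelSpace E] (μ : Measure E) [μ.IsAddHaarMeasure]

lemma le_lintegral_rpow_neg_edist_mul_indicator {u v : E} {δ t : ℝ} (huv : dist u v ≤ δ)
    (ht : 0 ≤ t) (A : ℝ≥0∞) :
    (A * μ (closedBall 0 (δ / 4))) ^ 2 * ENNReal.ofReal δ ^ (-t) ≤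
      ∫⁻ x, ∫⁻ y, edist x y ^ (-t) * (A * (closedBall u (δ / 2)).indicator 1 x) *
        (A * (closedBall v (δ / 2)).indicator 1 y) ∂μ ∂μ := by
  obtain ⟨c₁, c₂, h₁, h₂, hclose⟩ := exists_closedBall_quarter_subset_of_dist_le huv
  calc (A * μ (closedBall 0 (δ / 4))) ^ 2 * ENNReal.ofReal δ ^ (-t)
      = ∫⁻ x, ∫⁻ y, ENNReal.ofReal δ ^ (-t) * (A * (closedBall c₁ (δ / 4)).indicator 1 x) *
          (A * (closedBall c₂ (δ / 4)).indicator 1 y) ∂μ ∂μ := by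
        have hA : ∀ c, Measurable fun x =>
            A * (closedBall c (δ / 4)).indicator (1 : E → ℝ≥0∞) x :=
          fun c => (measurable_one.indicator measurableSet_closedBall).const_mul A
        have hball : ∀ c K, ∫⁻ x, K * (A * (closedBall c (δ / 4)).indicator 1 x) ∂μ =
            K * (A * μ (closedBall 0 (δ / 4))) := fun c K => by
          rw [lintegral_const_mul _ (hA c), lintegral_const_mul _ (measurable_one.indicator
            measurableSet_closedBall), lintegral_indicator_one measurableSet_closedBall,
            Measure.addHaar_closedBall_center]
        simp only [hball, lintegral_mul_const _ ((hA c₁).const_mul _)]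
        ring
    _ ≤ _ := by
        refine lintegral_mono fun x => lintegral_mono fun y => ?_
        by_cases hx : x ∈ closedBall c₁ (δ / 4)
        · by_cases hy : y ∈ closedBall c₂ (δ / 4)
          · have hxy : edist x y ≤ ENNReal.ofReal δ :=
              (edist_le_ofReal (dist_nonneg.trans huv)).2 (hclose x hx y hy)
            simp only [indicator_of_mem hx, indicator_of_mem hy, indicator_of_mem (h₁ hx),
              indicator_of_mem (h₂ hy), ENNReal.rpow_neg]
            gcongr
          · simp [indicator_of_notMem hy]
        · simp [indicator_of_notMem hx]

lemma card_mul_le_lintegral_rpow_neg_edist {ι : Type*} (s : Finset ι) (z : ι → E) {δ t : ℝ}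
    (ht : 0 ≤ t) (A : ℝ≥0∞) {ρ : E → ℝ≥0∞}
    (hρ : ∀ x, A * ∑ i ∈ s, (closedBall (z i) (δ / 2)).indicator 1 x ≤ ρ x) :
    #{q ∈ s ×ˢ s | dist (z q.1) (z q.2) ≤ δ} *
        ((A * μ (closedBall 0 (δ / 4))) ^ 2 * ENNReal.ofReal δ ^ (-t)) ≤
      ∫⁻ x, ∫⁻ y, edist x y ^ (-t) * ρ x * ρ y ∂μ ∂μ := by
  set g : ι × ι → E → E → ℝ≥0∞ := fun q x y => edist x y ^ (-t) *
    (A * (closedBall (z q.1) (δ / 2)).indicator 1 x) *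
    (A * (closedBall (z q.2) (δ / 2)).indicator 1 y)
  calc _ = ∑ q ∈ s ×ˢ s with dist (z q.1) (z q.2) ≤ δ,
        (A * μ (closedBall 0 (δ / 4))) ^ 2 * ENNReal.ofReal δ ^ (-t) := by
        rw [sum_const, nsmul_eq_mul]
    _ ≤ ∑ q ∈ s ×ˢ s with dist (z q.1) (z q.2) ≤ δ, ∫⁻ x, ∫⁻ y, g q x y ∂μ ∂μ :=
        sum_le_sum fun q hq =>
          le_lintegral_rpow_neg_edist_mul_indicator μ (mem_filter.1 hq).2 ht A
    _ ≤ ∑ q ∈ s ×ˢ s, ∫⁻ x, ∫⁻ y, g q x y ∂μ ∂μ :=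
        sum_le_sum_of_subset (filter_subset _ _)
    _ ≤ ∫⁻ x, ∫⁻ y, ∑ q ∈ s ×ˢ s, g q x y ∂μ ∂μ :=
        (sum_lintegral_le_lintegral_sum μ _ _).trans
          (lintegral_mono fun x => sum_lintegral_le_lintegral_sum μ _ _)
    _ = ∫⁻ x, ∫⁻ y, edist x y ^ (-t) *
          (A * ∑ i ∈ s, (closedBall (z i) (δ / 2)).indicator 1 x) *
          (A * ∑ j ∈ s, (closedBall (z j) (δ / 2)).indicator 1 y) ∂μ ∂μ := by
        refine lintegral_congr fun x => lintegral_congr fun y => ?_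
        simp only [g, sum_product, mul_sum, sum_mul, mul_assoc]
        exact sum_comm
    _ ≤ _ := lintegral_mono fun x => lintegral_mono fun y => by gcongr <;> exact hρ _

end Energy

lemma mollify_smul_sum_dirac (ψ : E2 → ℝ) (δ : ℝ) {ι : Type*} (c : ℝ≥0∞) (s : Finset ι)
    (z : ι → E2) (x : E2) :
    mollify ψ δ (c • ∑ i ∈ s, Measure.dirac (z i)) x =
      c.toReal * ∑ i ∈ s, (δ ^ 2)⁻¹ * ψ (δ⁻¹ • (x - z i)) := by
  rw [mollify, integral_smul_measure,
    integral_finsetSum_measure fun i _ => integrable_dirac enorm_lt_top]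
  simp only [integral_dirac, smul_eq_mul]

lemma IsApproxId.indicator_closedBall_le {ψ : E2 → ℝ} (hψ : IsApproxId ψ) {δ : ℝ} (hδ : 0 < δ)
    (z x : E2) : (closedBall z (δ / 2)).indicator 1 x ≤ ψ (δ⁻¹ • (x - z)) := by
  by_cases hx : x ∈ closedBall z (δ / 2)
  · rw [indicator_of_mem hx]
    refine hψ.2.2.1 _ ?_
    rw [norm_smul, norm_inv, Real.norm_of_nonneg hδ.le, inv_mul_le_iff₀ hδ, ← dist_eq_norm]
    linarith [mem_closedBall.1 hx]
  · rw [indicator_of_notMem hx]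
    exact hψ.2.2.2.2.1 _

lemma IsApproxId.ofReal_mul_sum_indicator_le_mollify {ψ : E2 → ℝ} (hψ : IsApproxId ψ) {δ : ℝ}
    (hδ : 0 < δ) {ι : Type*} (c : ℝ≥0∞) (s : Finset ι) (z : ι → E2) (x : E2) :
    ENNReal.ofReal (c.toReal * (δ ^ 2)⁻¹) * ∑ i ∈ s, (closedBall (z i) (δ / 2)).indicator 1 x ≤
      ENNReal.ofReal (mollify ψ δ (c • ∑ i ∈ s, Measure.dirac (z i)) x) := by
  have hψ0 : ∀ i ∈ s, 0 ≤ c.toReal * ((δ ^ 2)⁻¹ * ψ (δ⁻¹ • (x - z i))) := fun i _ =>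
    by have := hψ.2.2.2.2.1 (δ⁻¹ • (x - z i)); positivity
  rw [mollify_smul_sum_dirac, mul_sum s _ c.toReal, ENNReal.ofReal_sum_of_nonneg hψ0, mul_sum]
  refine sum_le_sum fun i _ => ?_
  by_cases hx : x ∈ closedBall (z i) (δ / 2)
  · rw [indicator_of_mem hx, Pi.one_apply, mul_one, ← mul_assoc]
    refine ENNReal.ofReal_le_ofReal (le_mul_of_one_le_right (by positivity) ?_)
    simpa [indicator_of_mem hx] using hψ.indicator_closedBall_le hδ (z i) x
  · simp [indicator_of_notMem hx]

lemma IsApproxId.card_mul_le_mollE {ψ : E2 → ℝ} (hψ : IsApproxId ψ) {δ t : ℝ} (hδ : 0 < δ)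
    (ht : 0 ≤ t) {ι : Type*} (c : ℝ≥0∞) (s : Finset ι) (z : ι → E2) :
    #{q ∈ s ×ˢ s | dist (z q.1) (z q.2) ≤ δ} *
        (ENNReal.ofReal (c.toReal * Real.pi / 16) ^ 2 * ENNReal.ofReal δ ^ (-t)) ≤
      mollE ψ t δ (c • ∑ i ∈ s, Measure.dirac (z i)) := by
  have hAV : ENNReal.ofReal (c.toReal * (δ ^ 2)⁻¹) * volume (closedBall (0 : E2) (δ / 4)) =
      ENNReal.ofReal (c.toReal * Real.pi / 16) := by
    rw [EuclideanSpace.volume_closedBall_fin_two, ← ENNReal.ofReal_pow (by positivity),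
      ← mul_assoc, ← ENNReal.ofReal_mul (by positivity), ← ENNReal.ofReal_mul (by positivity)]
    congr 1
    field_simp
    ring
  rw [← hAV]
  exact card_mul_le_lintegral_rpow_neg_edist volume s z ht _
    (hψ.ofReal_mul_sum_indicator_le_mollify hδ c s z)

/-- Let `P ⊂ ℝ²` be a finite set and `σ` its normalised counting
measure. If `I_t^δ(σ^n) ≤ C` then the number of `2n`-tuples
`(p₁,…,p_n,q₁,…,q_n) ∈ P^{2n}` with `|(p₁+⋯+p_n) − (q₁+⋯+q_n)| ≤ δ` is at most
`C' · C · δ^t |P|^{2n}` for an absolute constant `C' > 0`. -/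
theorem statement14 :
    ∃ C' : ℝ, 0 < C' ∧
      ∀ ψ : E2 → ℝ, IsApproxId ψ →
      ∀ P : Finset E2, P.Nonempty →
      ∀ t δ : ℝ, 0 < t → 0 < δ →
      ∀ n : ℕ, 1 ≤ n → ∀ C : ℝ, 1 ≤ C →
        mollE ψ t δ (convPow (countMeas P) n) ≤ ENNReal.ofReal C →
        (Nat.card {pq : (Fin n → E2) × (Fin n → E2) //
            (∀ i, pq.1 i ∈ P) ∧ (∀ i, pq.2 i ∈ P) ∧
            dist (∑ i, pq.1 i) (∑ i, pq.2 i) ≤ δ} : ℝ)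
          ≤ C' * C * δ ^ t * (P.card : ℝ) ^ (2 * n) := by
  classical
  refine ⟨256 / Real.pi ^ 2, by positivity, ?_⟩
  intro ψ hψ P hP t δ ht hδ n _ C hC hE
  set T := Fintype.piFinset fun _ : Fin n => P
  set N : ℝ := (#P : ℝ) ^ n
  have hN : 0 < N := by have := hP.card_pos; positivity
  have hcard : Nat.card {pq : (Fin n → E2) × (Fin n → E2) //
      (∀ i, pq.1 i ∈ P) ∧ (∀ i, pq.2 i ∈ P) ∧ dist (∑ i, pq.1 i) (∑ i, pq.2 i) ≤ δ} =
      #{q ∈ T ×ˢ T | dist (∑ i, q.1 i) (∑ i, q.2 i) ≤ δ} := by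
    rw [← Nat.card_eq_finsetCard]
    exact Nat.card_congr (Equiv.subtypeEquivRight fun q => by simp [T, and_assoc])
  have key := (hψ.card_mul_le_mollE hδ ht.le _ T fun f => ∑ i, f i).trans
    (convPow_countMeas P n ▸ hE)
  simp only [ENNReal.toReal_inv, ENNReal.toReal_pow, ENNReal.toReal_natCast] at key
  rw [ENNReal.ofReal_rpow_of_pos hδ, ← ENNReal.ofReal_pow (by positivity),
    ← ENNReal.ofReal_mul (by positivity), ← ENNReal.ofReal_natCast, ← ENNReal.ofReal_mul
    (by positivity), ENNReal.ofReal_le_ofReal_iff (by linarith), Real.rpow_neg hδ.le] at key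
  rw [hcard, pow_mul']
  set d : ℝ := (#{q ∈ T ×ˢ T | dist (∑ i, q.1 i) (∑ i, q.2 i) ≤ δ} : ℝ)
  have hδt : 0 < δ ^ t := Real.rpow_pos_of_pos hδ t
  calc d = d * ((N⁻¹ * Real.pi / 16) ^ 2 * (δ ^ t)⁻¹) * (256 / Real.pi ^ 2 * δ ^ t * N ^ 2) := by
        field_simp
        ring
    _ ≤ C * (256 / Real.pi ^ 2 * δ ^ t * N ^ 2) := by gcongr
    _ = 256 / Real.pi ^ 2 * C * δ ^ t * N ^ 2 := by ring
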